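/- arXiv:2303.12931 — 2 statements merged into one kernel-verified Lean document; each statement's English description precedes it below -/
import Mathlib

section
/- If Z1 and Z2 are independent real-valued random variables, neither of which is almost surely constant, then P(Z1+Z2 ∈ {0,1}) = 1 is impossible; in particular, Z1 + Z2 cannot have a Bernoulli distribution. -/
open MeasureTheory ProbabilityTheory

/-- From non-constancy, every value is missed with positive probability. -/
lemma freq_ne_of_not_const {Ω : Type*} [MeasurableSpace Ω] (μ : Measure Ω)
    [IsProbabilityMeasure μ] (Z : Ω → ℝ) (hZ : Measurable Z)
    (hnc : ¬ ∃ c : ℝ, μ {ω | Z ω = c} = 1) (b : ℝ) : ∃ᵐ ω ∂μ, Z ω ≠ b := by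
  rw [MeasureTheory.frequently_ae_iff]
  intro h0
  apply hnc
  refine ⟨b, ?_⟩
  have hm : MeasurableSet {ω | Z ω ≠ b} := (hZ (measurableSet_singleton b)).compl
  have hset : {ω | Z ω = b} = {ω | Z ω ≠ b}ᶜ := by ext ω; simp [not_not]
  rw [hset, measure_compl hm (measure_ne_top μ _), h0]
  simp

/-- If `Z1` and `Z2` are independent real-valued random variables, neither of which is
almost surely constant, then `Z1 + Z2` cannot be supported on `{0, 1}`, i.e. it cannot be
a Bernoulli random variable. -/
theorem bernoulli_not_convolution
    {Ω : Type*} [MeasurableSpace Ω] (μ : Measure Ω) [IsProbabilityMeasure μ]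
    (Z1 Z2 : Ω → ℝ) (hZ1 : Measurable Z1) (hZ2 : Measurable Z2)
    (hindep : IndepFun Z1 Z2 μ)
    (hnc1 : ¬ ∃ c : ℝ, μ {ω | Z1 ω = c} = 1)
    (hnc2 : ¬ ∃ c : ℝ, μ {ω | Z2 ω = c} = 1) :
    μ {ω | Z1 ω + Z2 ω ∈ ({0, 1} : Set ℝ)} ≠ 1 := by
  intro hS
  -- two "support points" for each variable
  obtain ⟨x1, x2, hx12, hx1, hx2⟩ :=
    exists_ne_forall_mem_nhds_pos_measure_preimage
      (μ := μ) (f := Z1) (freq_ne_of_not_const μ Z1 hZ1 hnc1)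
  obtain ⟨y1, y2, hy12, hy1, hy2⟩ :=
    exists_ne_forall_mem_nhds_pos_measure_preimage
      (μ := μ) (f := Z2) (freq_ne_of_not_const μ Z2 hZ2 hnc2)
  -- the complement of the event has measure zero
  have hmS : MeasurableSet {ω | Z1 ω + Z2 ω ∈ ({0, 1} : Set ℝ)} := by
    exact (hZ1.add hZ2) ((measurableSet_singleton (1:ℝ)).insert 0)
  have hcompl : μ {ω | Z1 ω + Z2 ω ∈ ({0, 1} : Set ℝ)}ᶜ = 0 := by
    rw [measure_compl hmS (measure_ne_top μ _), hS]; simp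
  -- key claim: any pair of support points sums into {0,1}
  have key : ∀ x y : ℝ, (∀ s ∈ nhds x, 0 < μ (Z1 ⁻¹' s)) →
      (∀ t ∈ nhds y, 0 < μ (Z2 ⁻¹' t)) → x + y ∈ ({0, 1} : Set ℝ) := by
    intro x y hx hy
    by_contra hxy
    have h0 : x + y ≠ 0 := fun h => hxy (by simp [h])
    have h1 : x + y ≠ 1 := fun h => hxy (by simp [h])
    set ε : ℝ := min (|x + y|) (|x + y - 1|) / 2 with hε
    have hε0 : 0 < ε := by
      apply div_pos _ (by norm_num)
      exact lt_min (abs_pos.mpr h0) (abs_pos.mpr (sub_ne_zero.mpr h1))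
    have hA : 0 < μ (Z1 ⁻¹' Metric.ball x ε) := hx _ (Metric.ball_mem_nhds x hε0)
    have hB : 0 < μ (Z2 ⁻¹' Metric.ball y ε) := hy _ (Metric.ball_mem_nhds y hε0)
    have hAB : 0 < μ (Z1 ⁻¹' Metric.ball x ε ∩ Z2 ⁻¹' Metric.ball y ε) := by
      rw [hindep.measure_inter_preimage_eq_mul _ _ measurableSet_ball measurableSet_ball]
      exact ENNReal.mul_pos hA.ne' hB.ne'
    have hsub : Z1 ⁻¹' Metric.ball x ε ∩ Z2 ⁻¹' Metric.ball y ε ⊆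
        {ω | Z1 ω + Z2 ω ∈ ({0, 1} : Set ℝ)}ᶜ := by
      rintro ω ⟨ha, hb⟩
      have ha' : |Z1 ω - x| < ε := by simpa [Real.dist_eq] using ha
      have hb' : |Z2 ω - y| < ε := by simpa [Real.dist_eq] using hb
      have habs : |Z1 ω + Z2 ω - (x + y)| < 2 * ε := by
        calc |Z1 ω + Z2 ω - (x + y)| ≤ |Z1 ω - x| + |Z2 ω - y| := by
              have := abs_add_le (Z1 ω - x) (Z2 ω - y)
              simpa [sub_add_sub_comm] using this
          _ < 2 * ε := by linarith
      have h2ε : 2 * ε ≤ min (|x + y|) (|x + y - 1|) := by rw [hε]; linarith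
      intro hmem
      rcases hmem with h | h
      · have h' : Z1 ω + Z2 ω = 0 := h
        have hlt : |x + y| < 2 * ε := by
          have : |x + y| = |Z1 ω + Z2 ω - (x + y)| := by rw [h', zero_sub, abs_neg]
          rw [this]; exact habs
        have := lt_of_lt_of_le hlt h2ε
        exact absurd this (not_lt.mpr (min_le_left _ _))
      · have h' : Z1 ω + Z2 ω = 1 := h
        have hlt : |x + y - 1| < 2 * ε := by
          have : |x + y - 1| = |Z1 ω + Z2 ω - (x + y)| := by
            rw [h', abs_sub_comm]
          rw [this]; exact habs
        have := lt_of_lt_of_le hlt h2ε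
        exact absurd this (not_lt.mpr (min_le_right _ _))
    have := measure_mono_null hsub hcompl
    exact absurd this hAB.ne'
  -- use WLOG orderings
  have main : ∀ a1 a2 b1 b2 : ℝ, a1 < a2 → b1 < b2 →
      a1 + b1 ∈ ({0, 1} : Set ℝ) → a2 + b1 ∈ ({0, 1} : Set ℝ) →
      a2 + b2 ∈ ({0, 1} : Set ℝ) → False := by
    intro a1 a2 b1 b2 ha hb s1 s2 s3
    simp only [Set.mem_insert_iff, Set.mem_singleton_iff] at s1 s2 s3
    rcases s1 with h1 | h1 <;> rcases s2 with h2 | h2 <;> rcases s3 with h3 | h3 <;> linarith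
  rcases lt_or_gt_of_ne hx12 with hxlt | hxlt <;>
    rcases lt_or_gt_of_ne hy12 with hylt | hylt
  · exact main x1 x2 y1 y2 hxlt hylt (key _ _ hx1 hy1) (key _ _ hx2 hy1) (key _ _ hx2 hy2)
  · exact main x1 x2 y2 y1 hxlt hylt (key _ _ hx1 hy2) (key _ _ hx2 hy2) (key _ _ hx2 hy1)
  · exact main x2 x1 y1 y2 hxlt hylt (key _ _ hx2 hy1) (key _ _ hx1 hy1) (key _ _ hx1 hy2)
  · exact main x2 x1 y2 y1 hxlt hylt (key _ _ hx2 hy2) (key _ _ hx1 hy2) (key _ _ hx1 hy1)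
end

section
/- Let X^(k), k = 1,...,K, be independent with X^(k) ∼ Beta(θ/K + (k−1)/K, β/K). Then the geometric mean (∏_{k=1}^K X^(k))^{1/K} has a Beta(θ, β) distribution. -/
open MeasureTheory ProbabilityTheory

/-- The beta function `B(a, b) = Γ(a)Γ(b)/Γ(a+b)`. -/
noncomputable def betaFun (a b : ℝ) : ℝ := Real.Gamma a * Real.Gamma b / Real.Gamma (a + b)

/-- The Beta distribution with parameters `a, b > 0`, defined by its density
`x^(a-1) (1-x)^(b-1) / B(a,b)` on `(0, 1)`. -/
noncomputable def betaMeasure' (a b : ℝ) : Measure ℝ :=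
  volume.withDensity (fun x =>
    ENNReal.ofReal (if x ∈ Set.Ioo (0 : ℝ) 1
      then x ^ (a - 1) * (1 - x) ^ (b - 1) / betaFun a b else 0))

/-!
By independence, the `n`-th moment of the geometric mean `G` is
`∏_{k<K} B((θ+k+n)/K, β/K) / B((θ+k)/K, β/K)`. Writing `B` through `Γ`, this is a ratio of
products `F(c) = ∏_{k<K} Γ((c+k)/K)`, which satisfy `F(c+1) = (c/K) F(c)` (the functional
equation behind Gauss's multiplication formula `F(c) ∝ K^{-c} Γ(c)`). Hence the product telescopes
to `B(θ+n, β)/B(θ, β)`, the `n`-th moment of `Beta(θ, β)`. Both laws live on `[0, 1]`, where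
polynomials are uniformly dense in the continuous functions (Weierstrass), so equal moments give
equal laws.
-/

namespace ProbabilityTheory

open Set

lemma betaMeasure'_eq_betaMeasure (a b : ℝ) : betaMeasure' a b = betaMeasure a b := by
  refine congrArg volume.withDensity (funext fun x => ?_)
  simp only [betaPDF_eq, mem_Ioo, betaFun, beta]
  split_ifs <;> ring_nf

lemma measurable_betaPDF (a b : ℝ) : Measurable (betaPDF a b) :=
  (measurable_betaPDFReal a b).ennreal_ofReal

lemma betaPDFReal_nonneg {a b : ℝ} (ha : 0 < a) (hb : 0 < b) (x : ℝ) : 0 ≤ betaPDFReal a b x := by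
  rw [betaPDFReal]
  split_ifs with hx
  · have := beta_pos ha hb
    have := Real.rpow_nonneg hx.1.le (a - 1)
    have := Real.rpow_nonneg (sub_nonneg.2 hx.2.le) (b - 1)
    positivity
  · rfl

lemma integral_betaPDFReal {a b : ℝ} (ha : 0 < a) (hb : 0 < b) : ∫ x, betaPDFReal a b x = 1 := by
  rw [integral_eq_lintegral_of_nonneg_ae (ae_of_all _ (betaPDFReal_nonneg ha hb))
    (measurable_betaPDFReal a b).aestronglyMeasurable]
  simpa [betaPDF] using congrArg ENNReal.toReal (lintegral_betaPDF_eq_one ha hb)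

lemma ae_mem_Ioo_betaMeasure (a b : ℝ) : ∀ᵐ x ∂betaMeasure a b, x ∈ Ioo 0 1 := by
  refine (ae_withDensity_iff (measurable_betaPDF a b)).2 (ae_of_all _ fun x hx => ?_)
  by_contra h
  exact hx (by rw [betaPDF, betaPDFReal, if_neg (show ¬(0 < x ∧ x < 1) from h),
    ENNReal.ofReal_zero])

lemma integral_rpow_betaMeasure {a b r : ℝ} (ha : 0 < a) (hb : 0 < b) (har : 0 < a + r) :
    ∫ x, x ^ r ∂betaMeasure a b = beta (a + r) b / beta a b := by
  have hdensity : ∀ x, betaPDFReal a b x * x ^ r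
      = beta (a + r) b / beta a b * betaPDFReal (a + r) b x := by
    intro x
    simp only [betaPDFReal]
    split_ifs with hx
    · rw [show a + r - 1 = a - 1 + r by ring, Real.rpow_add hx.1]
      field_simp [(beta_pos har hb).ne']
    · simp
  rw [betaMeasure, integral_withDensity_eq_integral_toReal_smul (measurable_betaPDF a b)
    (ae_of_all _ fun _ => ENNReal.ofReal_lt_top)]
  simp only [betaPDF, ENNReal.toReal_ofReal (betaPDFReal_nonneg ha hb _), smul_eq_mul, hdensity,
    integral_const_mul, integral_betaPDFReal har hb, mul_one]

lemma integral_pow_betaMeasure {a b : ℝ} (ha : 0 < a) (hb : 0 < b) (n : ℕ) :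
    ∫ x, x ^ n ∂betaMeasure a b = beta (a + n) b / beta a b := by
  simp_rw [← integral_rpow_betaMeasure ha hb (by positivity : 0 < a + n), Real.rpow_natCast]

end ProbabilityTheory

namespace MeasureTheory.Measure

open Set

variable {μ ν : Measure ℝ} [IsFiniteMeasure μ] [IsFiniteMeasure ν]

lemma integrable_of_ae_mem_of_isCompact {s : Set ℝ} (hs : IsCompact s) (hμ : ∀ᵐ x ∂μ, x ∈ s)
    {f : ℝ → ℝ} (hf : Continuous f) : Integrable f μ := by
  rw [← restrict_eq_self_of_ae_mem hμ]
  exact hf.continuousOn.integrableOn_compact hs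

variable {a b : ℝ}

lemma integral_eval_eq_of_moments (hμ : ∀ᵐ x ∂μ, x ∈ Icc a b) (hν : ∀ᵐ x ∂ν, x ∈ Icc a b)
    (hmom : ∀ n : ℕ, ∫ x, x ^ n ∂μ = ∫ x, x ^ n ∂ν) (p : Polynomial ℝ) :
    ∫ x, p.eval x ∂μ = ∫ x, p.eval x ∂ν := by
  have hint : ∀ ρ : Measure ℝ, [IsFiniteMeasure ρ] → (∀ᵐ x ∂ρ, x ∈ Icc a b) →
      ∀ i ∈ Finset.range (p.natDegree + 1), Integrable (fun x => p.coeff i * x ^ i) ρ :=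
    fun ρ _ hρ i _ => integrable_of_ae_mem_of_isCompact isCompact_Icc hρ (by fun_prop)
  simp only [Polynomial.eval_eq_sum_range]
  rw [integral_finsetSum _ (hint μ hμ), integral_finsetSum _ (hint ν hν)]
  simp only [integral_const_mul, hmom]

lemma integral_eq_of_moments_of_ae_mem_Icc (hμ : ∀ᵐ x ∂μ, x ∈ Icc a b)
    (hν : ∀ᵐ x ∂ν, x ∈ Icc a b) (hmom : ∀ n : ℕ, ∫ x, x ^ n ∂μ = ∫ x, x ^ n ∂ν)
    {f : ℝ → ℝ} (hf : Continuous f) : ∫ x, f x ∂μ = ∫ x, f x ∂ν := by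
  set C := μ.real univ + ν.real univ + 1
  have hC : 0 < C := by positivity
  refine eq_of_forall_dist_le fun ε hε => ?_
  obtain ⟨p, hp⟩ := exists_polynomial_near_of_continuousOn a b f hf.continuousOn (ε / C)
    (by positivity)
  have approx : ∀ ρ : Measure ℝ, [IsFiniteMeasure ρ] → (∀ᵐ x ∂ρ, x ∈ Icc a b) →
      dist (∫ x, f x ∂ρ) (∫ x, p.eval x ∂ρ) ≤ ε / C * ρ.real univ := by
    intro ρ _ hρ
    rw [dist_eq_norm, ← integral_sub (integrable_of_ae_mem_of_isCompact isCompact_Icc hρ hf)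
      (integrable_of_ae_mem_of_isCompact isCompact_Icc hρ p.continuous)]
    refine norm_integral_le_of_norm_le_const (hρ.mono fun x hx => ?_)
    rw [Real.norm_eq_abs, abs_sub_comm]
    exact (hp x hx).le
  calc dist (∫ x, f x ∂μ) (∫ x, f x ∂ν)
      ≤ dist (∫ x, f x ∂μ) (∫ x, p.eval x ∂μ) + dist (∫ x, f x ∂ν) (∫ x, p.eval x ∂ν) := by
        rw [integral_eval_eq_of_moments hμ hν hmom, dist_comm (∫ x, f x ∂ν)]
        exact dist_triangle _ _ _
    _ ≤ ε / C * μ.real univ + ε / C * ν.real univ := add_le_add (approx μ hμ) (approx ν hν)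
    _ ≤ ε := by
        rw [← mul_add, div_mul_eq_mul_div, div_le_iff₀ hC]
        exact mul_le_mul_of_nonneg_left (by linarith) hε.le

lemma ext_of_moments_of_ae_mem_Icc (hμ : ∀ᵐ x ∂μ, x ∈ Icc a b) (hν : ∀ᵐ x ∂ν, x ∈ Icc a b)
    (hmom : ∀ n : ℕ, ∫ x, x ^ n ∂μ = ∫ x, x ^ n ∂ν) : μ = ν :=
  ext_of_forall_integral_eq_of_IsFiniteMeasure fun f =>
    integral_eq_of_moments_of_ae_mem_Icc hμ hν hmom f.continuous

end MeasureTheory.Measure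

section GammaProduct

open Finset Real

noncomputable def gammaMulProd (K : ℕ) (c : ℝ) : ℝ := ∏ k ∈ range K, Gamma ((c + k) / K)

variable {K : ℕ} {c : ℝ}

lemma gammaMulProd_pos (hK : 0 < K) (hc : 0 < c) : 0 < gammaMulProd K c :=
  prod_pos fun _ _ => Gamma_pos_of_pos (by positivity)

lemma gammaMulProd_add_one (hK : 0 < K) (hc : 0 < c) :
    gammaMulProd K (c + 1) = c / K * gammaMulProd K c := by
  have hlast : Gamma ((c + K) / K) = c / K * Gamma (c / K) := by
    rw [add_div, div_self (by positivity), Gamma_add_one (by positivity)]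
  -- both sides of `hsplit` are `∏_{k ≤ K} Γ((c+k)/K)`, split off at either end
  have hsplit := (prod_range_succ' (fun k => Gamma ((c + k) / K)) K).symm.trans
    (prod_range_succ _ K)
  simp only [Nat.cast_add, Nat.cast_one, Nat.cast_zero, add_zero, hlast] at hsplit
  refine mul_right_cancel₀ (Gamma_pos_of_pos (by positivity : 0 < c / K)).ne' ?_
  simp only [gammaMulProd, add_right_comm c 1, add_assoc c]
  linear_combination hsplit

lemma gammaMulProd_add_nat (hK : 0 < K) (hc : 0 < c) (n : ℕ) :
    gammaMulProd K (c + n) = (∏ j ∈ range n, (c + j)) / K ^ n * gammaMulProd K c := by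
  induction n with
  | zero => simp
  | succ n ih =>
    rw [Nat.cast_succ, ← add_assoc, gammaMulProd_add_one hK (by positivity), ih, prod_range_succ,
      pow_succ]
    ring

lemma prod_beta_div_beta_eq {b : ℝ} (hK : 0 < K) (hc : 0 < c) (hb : 0 < b) (n : ℕ) :
    ∏ k ∈ range K, beta ((c + k + n) / K) (b / K) / beta ((c + k) / K) (b / K)
      = (∏ j ∈ range n, (c + j)) / ∏ j ∈ range n, (c + b + j) := by
  have hfactor : ∀ k ∈ range K, beta ((c + k + n) / K) (b / K) / beta ((c + k) / K) (b / K)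
      = Gamma ((c + n + k) / K) * Gamma ((c + b + k) / K)
        / (Gamma ((c + k) / K) * Gamma ((c + b + n + k) / K)) := by
    intro k _
    have : 0 < Gamma (b / K) := Gamma_pos_of_pos (by positivity)
    have : 0 < Gamma ((c + k) / K) := Gamma_pos_of_pos (by positivity)
    have : 0 < Gamma ((c + b + k) / K) := Gamma_pos_of_pos (by positivity)
    have : 0 < Gamma ((c + b + n + k) / K) := Gamma_pos_of_pos (by positivity)
    simp only [beta, ← add_div]
    rw [show c + k + n + b = c + b + n + k by ring, show c + k + b = c + b + k by ring,
      show c + k + n = c + n + k by ring]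
    field_simp
  rw [prod_congr rfl hfactor, prod_div_distrib, prod_mul_distrib, prod_mul_distrib]
  change gammaMulProd K (c + n) * gammaMulProd K (c + b)
    / (gammaMulProd K c * gammaMulProd K (c + b + n)) = _
  have hcb : 0 < c + b := by positivity
  rw [gammaMulProd_add_nat hK hc, gammaMulProd_add_nat hK hcb]
  have := gammaMulProd_pos hK hc
  have := gammaMulProd_pos hK hcb
  have : 0 < ∏ j ∈ range n, (c + b + j) := prod_pos fun j _ => by positivity
  field_simp

lemma prod_beta_div_beta {b : ℝ} (hK : 0 < K) (hc : 0 < c) (hb : 0 < b) (n : ℕ) :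
    ∏ k ∈ range K, beta ((c + k + n) / K) (b / K) / beta ((c + k) / K) (b / K)
      = beta (c + n) b / beta c b := by
  -- the right side of `prod_beta_div_beta_eq` does not depend on `K`, so compare with `K = 1`
  simpa using (prod_beta_div_beta_eq hK hc hb n).trans (prod_beta_div_beta_eq one_pos hc hb n).symm

end GammaProduct

open Finset in
lemma rpow_prod_pow {ι : Type*} (s : Finset ι) {f : ι → ℝ} (hf : ∀ i ∈ s, 0 ≤ f i) (t : ℝ)
    (n : ℕ) : ((∏ i ∈ s, f i) ^ t) ^ n = ∏ i ∈ s, f i ^ (t * n) := by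
  rw [← Real.rpow_natCast, ← Real.rpow_mul (prod_nonneg hf), Real.finsetProd_rpow s f hf]

open Finset in
lemma rpow_prod_mem_Icc {ι : Type*} (s : Finset ι) {f : ι → ℝ} (hf : ∀ i ∈ s, f i ∈ Set.Icc 0 1)
    {t : ℝ} (ht : 0 ≤ t) : (∏ i ∈ s, f i) ^ t ∈ Set.Icc 0 1 :=
  have hprod := prod_nonneg fun i hi => (hf i hi).1
  ⟨Real.rpow_nonneg hprod t,
    Real.rpow_le_one hprod (prod_le_one (fun i hi => (hf i hi).1) fun i hi => (hf i hi).2) ht⟩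

namespace ProbabilityTheory

variable {Ω : Type*} [MeasurableSpace Ω] {μ : Measure Ω}

lemma iIndepFun.integral_rpow_prod_pow {ι : Type*} [Fintype ι] {X : ι → Ω → ℝ}
    (hindep : iIndepFun X μ) (hmeas : ∀ i, Measurable (X i)) (hX : ∀ᵐ ω ∂μ, ∀ i, 0 ≤ X i ω)
    (t : ℝ) (n : ℕ) :
    ∫ ω, ((∏ i, X i ω) ^ t) ^ n ∂μ = ∏ i, ∫ ω, X i ω ^ (t * n) ∂μ := by
  rw [← hindep.integral_fun_prod_comp (fun i => (hmeas i).aemeasurable)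
    (fun _ => (by fun_prop : Measurable fun x : ℝ => x ^ (t * n)).aestronglyMeasurable)]
  exact integral_congr_ae (hX.mono fun ω hω => rpow_prod_pow _ (fun i _ => hω i) t n)

lemma integral_rpow_of_map_eq_betaMeasure {Y : Ω → ℝ} (hY : AEMeasurable Y μ) {a b r : ℝ}
    (hlaw : μ.map Y = betaMeasure a b) (ha : 0 < a) (hb : 0 < b) (har : 0 < a + r) :
    ∫ ω, Y ω ^ r ∂μ = beta (a + r) b / beta a b := by
  rw [← integral_map hY (by fun_prop : Measurable fun x : ℝ => x ^ r).aestronglyMeasurable, hlaw,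
    integral_rpow_betaMeasure ha hb har]

end ProbabilityTheory

/-- Let `X^(k)`, `k = 0, ..., K-1`, be independent with `X^(k) ∼ Beta(θ/K + k/K, β/K)`.
Then the geometric mean `(∏ k, X^(k))^(1/K)` has a `Beta(θ, β)` distribution. -/
theorem geom_mean_beta
    {Ω : Type*} [MeasurableSpace Ω] (μ : Measure Ω) [IsProbabilityMeasure μ]
    (K : ℕ) (hK : 0 < K) (θ β : ℝ) (hθ : 0 < θ) (hβ : 0 < β)
    (X : Fin K → Ω → ℝ) (hmeas : ∀ k, Measurable (X k))
    (hindep : iIndepFun X μ)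
    (hlaw : ∀ k : Fin K, Measure.map (X k) μ
      = betaMeasure' (θ / K + (k : ℕ) / K) (β / K)) :
    Measure.map (fun ω => (∏ k, X k ω) ^ ((K : ℝ)⁻¹)) μ = betaMeasure' θ β := by
  simp only [betaMeasure'_eq_betaMeasure, ← add_div] at hlaw ⊢
  have hX : ∀ᵐ ω ∂μ, ∀ k, X k ω ∈ Set.Icc 0 1 := ae_all_iff.2 fun k =>
    ae_of_ae_map (hmeas k).aemeasurable <| (hlaw k).symm ▸
      (ae_mem_Ioo_betaMeasure _ _).mono fun _ h => Set.Ioo_subset_Icc_self h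
  set G := fun ω => (∏ k, X k ω) ^ (K : ℝ)⁻¹
  have hG : Measurable G := (Finset.measurable_prod _ fun k _ => hmeas k).pow_const _
  have hG01 : ∀ᵐ x ∂μ.map G, x ∈ Set.Icc (0 : ℝ) 1 :=
    (ae_map_iff hG.aemeasurable measurableSet_Icc).2 <|
      hX.mono fun ω hω => rpow_prod_mem_Icc _ (fun k _ => hω k) (by positivity)
  have : IsProbabilityMeasure (betaMeasure θ β) := isProbabilityMeasureBeta hθ hβ
  refine Measure.ext_of_moments_of_ae_mem_Icc hG01
    ((ae_mem_Ioo_betaMeasure θ β).mono fun _ h => Set.Ioo_subset_Icc_self h) fun n => ?_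
  calc ∫ x, x ^ n ∂μ.map G = ∏ k, ∫ ω, X k ω ^ ((K : ℝ)⁻¹ * n) ∂μ := by
        rw [integral_map hG.aemeasurable (by fun_prop)]
        exact hindep.integral_rpow_prod_pow hmeas (hX.mono fun ω hω k => (hω k).1) _ n
    _ = ∏ k : Fin K, beta ((θ + k + n) / K) (β / K) / beta ((θ + k) / K) (β / K) :=
        Finset.prod_congr rfl fun k _ => by
          rw [integral_rpow_of_map_eq_betaMeasure (hmeas k).aemeasurable (hlaw k) (by positivity)
            (by positivity) (by positivity)]
          congr 2
          ring
    _ = beta (θ + n) β / beta θ β := by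
        rw [Fin.prod_univ_eq_prod_range
          (fun k => beta ((θ + k + n) / K) (β / K) / beta ((θ + k) / K) (β / K)) K]
        exact prod_beta_div_beta hK hθ hβ n
    _ = ∫ x, x ^ n ∂betaMeasure θ β := (integral_pow_betaMeasure hθ hβ n).symm
end
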